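/- arXiv:1105.4389 — 6 statements merged into one kernel-verified Lean document; each statement's English description precedes it below -/
import Mathlib

section
/- Hankel determinant identity with repeated nodes: for a weight function w on (0,1) and distinct parameters y₁,…,y_p for which all integrals converge, det[∫_0^1 x^{j+k-2} w(x)/∏_{l=1}^p (x-y_l)² dx]_{1≤j,k≤p} = (1/∏_{j<k}(y_j-y_k)²) · det[∫_0^1 w(x)/((x-y_j)(x-y_k)) dx]_{1≤j,k≤p}. -/
/-!
Lagrange interpolation of `X ^ j` at the nodes gives the partial fraction expansion
`x ^ j / ∏ l, (x - y l) = ∑ a, y a ^ j * ω a / (x - y a)` with the nodal weights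
`ω a = ∏ l ≠ a, (y a - y l)⁻¹`. Multiplying the expansions for `j` and `k` and integrating
factors the Hankel matrix as `C * M * Cᵀ`, where `M` is the matrix on the right-hand side and
`C = Vᵀ * diagonal ω` with `V` the Vandermonde matrix. Finally `det C = det V * ∏ a, ω a`,
and `∏ a, ω a = ± (det V)⁻²`, so `(det C) ^ 2 = (det V)⁻² = Δ(y)⁻²`.
-/

open Real MeasureTheory

open Finset Matrix Polynomial

namespace Lagrange

variable {F : Type*} [Field F] {ι : Type*} [DecidableEq ι] {s : Finset ι} {v : ι → F}

theorem eval_div_eval_nodal {f : F[X]} {x : F} (hvs : Set.InjOn v s) (hf : f.degree < #s)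
    (hx : ∀ i ∈ s, x ≠ v i) :
    f.eval x / (nodal s v).eval x = ∑ i ∈ s, nodalWeight s v i * (x - v i)⁻¹ * f.eval (v i) := by
  rw [div_eq_iff (eval_nodal_not_at_node hx), mul_comm, ← eval_interpolate_not_at_node _ hx,
    ← eq_interpolate hvs hf]

end Lagrange

section PartialFractions

variable {F : Type*} [Field F] {n : ℕ}

def partialFractionMatrix (y : Fin n → F) : Matrix (Fin n) (Fin n) F :=
  (vandermonde y)ᵀ * diagonal (Lagrange.nodalWeight univ y)

theorem partialFractionMatrix_apply (y : Fin n → F) (j a : Fin n) :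
    partialFractionMatrix y j a = y a ^ (j : ℕ) * Lagrange.nodalWeight univ y a := by
  simp [partialFractionMatrix, mul_diagonal]

theorem pow_div_prod_sub_eq_sum {y : Fin n → F} (hy : Function.Injective y) (j : Fin n) {x : F}
    (hx : ∀ l, x ≠ y l) :
    x ^ (j : ℕ) / ∏ l, (x - y l) = ∑ a, partialFractionMatrix y j a / (x - y a) := by
  have hdeg : ((X : F[X]) ^ (j : ℕ)).degree < #(univ : Finset (Fin n)) := by
    rw [degree_X_pow, card_univ, Fintype.card_fin]
    exact_mod_cast j.isLt
  have h := Lagrange.eval_div_eval_nodal hy.injOn hdeg fun i _ => hx i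
  simp only [eval_pow, eval_X, Lagrange.eval_nodal] at h
  rw [h]
  refine sum_congr rfl fun a _ => ?_
  rw [partialFractionMatrix_apply]
  ring

theorem pow_add_mul_div_prod_sq_eq_sum {y : Fin n → F} (hy : Function.Injective y)
    (j k : Fin n) {x : F} (hx : ∀ l, x ≠ y l) (c : F) :
    x ^ ((j : ℕ) + (k : ℕ)) * c / ∏ l, (x - y l) ^ 2
      = ∑ a, ∑ b, partialFractionMatrix y j a * partialFractionMatrix y k b
          * (c / ((x - y a) * (x - y b))) := by
  have hsplit : x ^ ((j : ℕ) + (k : ℕ)) * c / ∏ l, (x - y l) ^ 2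
      = (x ^ (j : ℕ) / ∏ l, (x - y l)) * (x ^ (k : ℕ) / ∏ l, (x - y l)) * c := by
    rw [prod_pow, pow_add]
    ring
  rw [hsplit, pow_div_prod_sub_eq_sum hy j hx, pow_div_prod_sub_eq_sum hy k hx, sum_mul_sum,
    sum_mul]
  refine sum_congr rfl fun a _ => ?_
  rw [sum_mul]
  refine sum_congr rfl fun b _ => ?_
  simp only [div_eq_mul_inv, mul_inv]
  ring

end PartialFractions

theorem integral_hankel_eq_mul_mul_transpose {n : ℕ} {μ : Measure ℝ} (w : ℝ → ℝ)
    {y : Fin n → ℝ} (hy : Function.Injective y) (hμ : ∀ᵐ x ∂μ, ∀ l, x ≠ y l)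
    (hw : ∀ a b, Integrable (fun x => w x / ((x - y a) * (x - y b))) μ) :
    (of fun j k : Fin n => ∫ x, x ^ ((j : ℕ) + (k : ℕ)) * w x / ∏ l, (x - y l) ^ 2 ∂μ)
      = partialFractionMatrix y * (of fun a b => ∫ x, w x / ((x - y a) * (x - y b)) ∂μ)
          * (partialFractionMatrix y)ᵀ := by
  ext j k
  simp only [mul_apply, sum_mul, of_apply, transpose_apply]
  rw [integral_congr_ae (hμ.mono fun x hx => pow_add_mul_div_prod_sq_eq_sum hy j k hx (w x)),
    integral_finsetSum _ fun a _ => integrable_finsetSum _ fun b _ => (hw a b).const_mul _,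
    sum_comm]
  refine sum_congr rfl fun a _ => ?_
  rw [integral_finsetSum _ fun b _ => (hw a b).const_mul _]
  refine sum_congr rfl fun b _ => ?_
  rw [integral_const_mul]
  ring

section Vandermonde

variable {R : Type*} [CommRing R] {n : ℕ}

theorem det_vandermonde_sq (y : Fin n → R) :
    (vandermonde y).det ^ 2
      = ∏ q ∈ univ.filter (fun q : Fin n × Fin n => q.1 < q.2), (y q.1 - y q.2) ^ 2 := by
  rw [det_vandermonde, prod_filter, ← univ_product_univ, prod_product, ← prod_pow]
  refine prod_congr rfl fun i _ => ?_
  rw [← prod_pow, ← prod_filter]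
  refine prod_congr (by ext; simp) fun j _ => by ring

theorem prod_prod_erase_sub_sq (y : Fin n → R) :
    (∏ a, ∏ l ∈ univ.erase a, (y a - y l)) ^ 2 = (vandermonde y).det ^ 4 := by
  have h := prod_prod_Ioi_mul_eq_prod_prod_off_diag fun a l => y l - y a
  simp only [compl_singleton] at h
  rw [← h, det_vandermonde, ← prod_pow, ← prod_pow]
  refine prod_congr rfl fun i _ => ?_
  rw [← prod_pow, ← prod_pow]
  exact prod_congr rfl fun j _ => by ring

end Vandermonde

theorem det_partialFractionMatrix_sq {F : Type*} [Field F] {n : ℕ} {y : Fin n → F}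
    (hy : Function.Injective y) :
    (partialFractionMatrix y).det ^ 2 = ((vandermonde y).det ^ 2)⁻¹ := by
  have hV : (vandermonde y).det ≠ 0 := det_vandermonde_ne_zero_iff.2 hy
  have hW : ∏ a, Lagrange.nodalWeight univ y a = (∏ a, ∏ l ∈ univ.erase a, (y a - y l))⁻¹ := by
    simp only [Lagrange.nodalWeight, prod_inv_distrib]
  rw [partialFractionMatrix, det_mul, det_transpose, det_diagonal, hW, mul_pow, inv_pow,
    prod_prod_erase_sub_sq]
  field_simp

theorem hankel_repeated_nodes_general (p : ℕ) (w : ℝ → ℝ) (y : Fin p → ℝ)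
    (hy : Function.Injective y) (hy' : ∀ l, y l ∉ Set.Icc (0:ℝ) 1)
    (h2 : ∀ j k : Fin p, IntegrableOn
      (fun x => w x / ((x - y j) * (x - y k))) (Set.Ioo 0 1)) :
    (Matrix.of fun j k : Fin p =>
        ∫ x in Set.Ioo (0:ℝ) 1, x ^ ((j : ℕ) + (k : ℕ)) * w x / ∏ l, (x - y l) ^ 2).det
    = (1 / ∏ q ∈ Finset.univ.filter (fun q : Fin p × Fin p => q.1 < q.2),
          (y q.1 - y q.2) ^ 2) *
      (Matrix.of fun j k : Fin p =>
        ∫ x in Set.Ioo (0:ℝ) 1, w x / ((x - y j) * (x - y k))).det := by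
  have hnodes : ∀ᵐ x ∂volume.restrict (Set.Ioo (0:ℝ) 1), ∀ l, x ≠ y l :=
    ae_restrict_of_forall_mem measurableSet_Ioo fun x hx l hxl =>
      hy' l (hxl ▸ Set.mem_Icc_of_Ioo hx)
  rw [integral_hankel_eq_mul_mul_transpose w hy hnodes h2, det_mul, det_mul, det_transpose,
    mul_right_comm, ← sq, det_partialFractionMatrix_sq hy, det_vandermonde_sq, one_div]

/-- Hankel determinant identity with repeated nodes:
`det[∫₀¹ x^{j+k-2} w(x)/∏_l (x-y_l)² dx] = Δ(y)^{-2} det[∫₀¹ w(x)/((x-y_j)(x-y_k)) dx]`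
for distinct nodes `y₁,…,y_p` outside `[0,1]`. -/
theorem hankel_repeated_nodes (p : ℕ) (w : ℝ → ℝ) (y : Fin p → ℝ)
    (hy : Function.Injective y) (hy' : ∀ l, y l ∉ Set.Icc (0:ℝ) 1)
    (h1 : ∀ j k : Fin p, IntegrableOn
      (fun x => x ^ ((j : ℕ) + (k : ℕ)) * w x / ∏ l, (x - y l) ^ 2) (Set.Ioo 0 1))
    (h2 : ∀ j k : Fin p, IntegrableOn
      (fun x => w x / ((x - y j) * (x - y k))) (Set.Ioo 0 1)) :
    (Matrix.of fun j k : Fin p =>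
        ∫ x in Set.Ioo (0:ℝ) 1, x ^ ((j : ℕ) + (k : ℕ)) * w x / ∏ l, (x - y l) ^ 2).det
    = (1 / ∏ q ∈ Finset.univ.filter (fun q : Fin p × Fin p => q.1 < q.2),
          (y q.1 - y q.2) ^ 2) *
      (Matrix.of fun j k : Fin p =>
        ∫ x in Set.Ioo (0:ℝ) 1, w x / ((x - y j) * (x - y k))).det :=
  hankel_repeated_nodes_general p w y hy hy' h2
end

section
/- The Toeplitz determinant recurrence (Baxter): with r_n = φ_n(0)/κ_n and r̄_n = φ̄_n(0)/κ_n the reflection coefficients of a bi-orthogonal polynomial system, the Toeplitz determinants I_n[w] = det[w_{j-k}]_{0≤j,k≤n-1} satisfy I_{n+1}[w]·I_{n-1}[w] / (I_n[w])² = 1 - r_n·r̄_n for n ≥ 1. -/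
/-!
Let `T` be the Toeplitz matrix of size `n + 1`. Its corner minors are again Toeplitz: deleting the
first (or last) row and column leaves `I_n[w]`, deleting the first row and last column (or the
last row and first column) leaves `I_n[ζ^{±1} w]`, and deleting the first and last rows and
columns leaves `I_{n-1}[w]`. So the Desnanot–Jacobi identity for `T` reads
`I_{n+1} I_{n-1} = I_n² - I_n[ζw] I_n[ζ⁻¹w]`; divide by `I_n² ≠ 0`.
Desnanot–Jacobi is the `2 × 2` case of Jacobi's complementary minor theorem.
-/

/-- The Toeplitz determinant `I_n[ζ^ε w] = det[w_{-ε+j-k}]_{0≤j,k≤n-1}` built from the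
trigonometric moments `w : ℤ → ℂ`. -/
noncomputable def toeplitzDet (w : ℤ → ℂ) (ε : ℤ) (n : ℕ) : ℂ :=
  (Matrix.of fun j k : Fin n => w (-ε + (j : ℤ) - (k : ℤ))).det

open Matrix Polynomial

namespace Matrix

variable {R : Type*} [CommRing R] {m n : Type*} [Fintype m] [Fintype n] [DecidableEq m]
  [DecidableEq n]

theorem det_mul_det_adjugate_submatrix_inr (A : Matrix (m ⊕ n) (m ⊕ n) R) :
    A.det * (A.adjugate.submatrix Sum.inr Sum.inr).det
      = (A.submatrix Sum.inl Sum.inl).det * A.det ^ Fintype.card n := by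
  have hmul : A * fromBlocks 1 (A.adjugate.submatrix Sum.inl Sum.inr) 0
        (A.adjugate.submatrix Sum.inr Sum.inr)
      = fromBlocks (A.submatrix Sum.inl Sum.inl) 0 (A.submatrix Sum.inr Sum.inl) (A.det • 1) := by
    -- the right-hand block columns are those of `A * adjugate A = det A • 1`
    ext i (j | j)
    · rcases i with i | i <;> simp [mul_apply, Fintype.sum_sum_type, one_apply]
    · have hcol := congrFun (congrFun (mul_adjugate A) i) (.inr j)
      rcases i with i | i <;> simpa [mul_apply, Fintype.sum_sum_type, one_apply] using hcol
  simpa [det_mul, det_fromBlocks_zero₂₁, det_fromBlocks_zero₁₂, det_smul] using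
    congrArg det hmul

theorem det_adjugate_submatrix_inr [Nonempty n] (A : Matrix (m ⊕ n) (m ⊕ n) R) :
    (A.adjugate.submatrix Sum.inr Sum.inr).det
      = (A.submatrix Sum.inl Sum.inl).det * A.det ^ (Fintype.card n - 1) := by
  -- `B = X + A` specializes to `A` at `X = 0`, and `det B` is monic, hence cancellable.
  set B := charmatrix (-A)
  have hB : B.map (evalRingHom 0) = A := by
    ext i j
    rcases eq_or_ne i j with rfl | hij
    · simp [B, charmatrix_apply_eq]
    · simp [B, charmatrix_apply_ne _ _ _ hij]
  have hcancel : (B.adjugate.submatrix Sum.inr Sum.inr).det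
      = (B.submatrix Sum.inl Sum.inl).det * B.det ^ (Fintype.card n - 1) := by
    refine (charpoly_monic (-A)).isRegular.left (?_ : B.det * _ = B.det * _)
    rw [det_mul_det_adjugate_submatrix_inr, mul_left_comm, ← pow_succ',
      Nat.sub_add_cancel Fintype.card_pos]
  have hadj : B.adjugate.map (evalRingHom 0) = A.adjugate := by
    rw [← RingHom.mapMatrix_apply, RingHom.map_adjugate, RingHom.mapMatrix_apply, hB]
  have hspec := congrArg (evalRingHom 0) hcancel
  simp only [RingHom.map_det, map_mul, map_pow, RingHom.mapMatrix_apply, ← submatrix_map] at hspec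
  rwa [hadj, hB] at hspec

theorem desnanot_jacobi {k : ℕ} (M : Matrix (Fin (k + 2)) (Fin (k + 2)) R) :
    M.det * (M.submatrix (fun i : Fin k => i.succ.castSucc) fun i => i.succ.castSucc).det
      = M.adjugate 0 0 * M.adjugate (Fin.last _) (Fin.last _)
        - M.adjugate 0 (Fin.last _) * M.adjugate (Fin.last _) 0 := by
  -- `e` sends the `Fin 2` part to the corners `last, 0` and `Fin k` onto the interior.
  let e : Fin k ⊕ Fin 2 ≃ Fin (k + 2) := finSumFinEquiv.trans (finRotate _)
  have he_inl : e ∘ Sum.inl = fun i : Fin k => i.succ.castSucc := by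
    ext i
    have hi : Fin.castAdd 2 i ≠ Fin.last (k + 1) := Fin.ne_of_lt (by simp [Fin.lt_def])
    simp only [e, Function.comp_apply, Equiv.trans_apply, finSumFinEquiv_apply_left,
      coe_finRotate_of_ne_last hi]
    simp
  have he_last : e (.inr 0) = Fin.last _ := by
    have h0 : Fin.natAdd k (0 : Fin 2) ≠ Fin.last (k + 1) := Fin.ne_of_lt (by simp [Fin.lt_def])
    simp only [e, Equiv.trans_apply, finSumFinEquiv_apply_right, Fin.ext_iff,
      coe_finRotate_of_ne_last h0]
    simp
  have he_zero : e (.inr 1) = 0 := by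
    have h1 : Fin.natAdd k (1 : Fin 2) = Fin.last (k + 1) := rfl
    simp only [e, Equiv.trans_apply, finSumFinEquiv_apply_right, h1, finRotate_last]
  have h := det_adjugate_submatrix_inr (M.submatrix e e)
  rw [adjugate_submatrix_equiv_self, det_submatrix_equiv_self, submatrix_submatrix,
    submatrix_submatrix, he_inl, det_fin_two] at h
  simp only [submatrix_apply, Function.comp_apply, he_last, he_zero, Fintype.card_fin,
    Nat.add_one_sub_one, pow_one] at h
  linear_combination (-1 : R) * h

end Matrix

section Toeplitz

variable (w : ℤ → ℂ) (ε : ℤ)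

def toeplitzMatrix (n : ℕ) : Matrix (Fin n) (Fin n) ℂ :=
  of fun j k => w (-ε + (j : ℤ) - (k : ℤ))

theorem det_toeplitzMatrix (n : ℕ) : (toeplitzMatrix w ε n).det = toeplitzDet w ε n := rfl

variable {w ε}

theorem toeplitzMatrix_submatrix {δ : ℤ} {N n : ℕ} {r c : Fin n → Fin N}
    (h : ∀ i j, -δ + (r i : ℤ) - c j = -ε + i - j) :
    (toeplitzMatrix w δ N).submatrix r c = toeplitzMatrix w ε n := by
  ext i j
  simp [toeplitzMatrix, h]

variable (w ε)

theorem toeplitzMatrix_submatrix_succ_castSucc (n : ℕ) :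
    ((toeplitzMatrix w ε (n + 2)).submatrix (fun i : Fin n => i.succ.castSucc)
      fun i => i.succ.castSucc) = toeplitzMatrix w ε n :=
  toeplitzMatrix_submatrix fun i j => by simp; ring

theorem adjugate_toeplitzMatrix_zero_zero (n : ℕ) :
    (toeplitzMatrix w ε (n + 1)).adjugate 0 0 = toeplitzDet w ε n := by
  rw [adjugate_fin_succ_eq_det_submatrix, Fin.succAbove_zero,
    toeplitzMatrix_submatrix (ε := ε) fun i j => by simp; ring]
  simp [det_toeplitzMatrix]

theorem adjugate_toeplitzMatrix_last_last (n : ℕ) :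
    (toeplitzMatrix w ε (n + 1)).adjugate (Fin.last n) (Fin.last n) = toeplitzDet w ε n := by
  rw [adjugate_fin_succ_eq_det_submatrix, Fin.succAbove_last,
    toeplitzMatrix_submatrix (ε := ε) fun i j => by simp, Even.neg_one_pow ⟨n, by simp⟩,
    one_mul, det_toeplitzMatrix]

theorem adjugate_toeplitzMatrix_zero_last (n : ℕ) :
    (toeplitzMatrix w ε (n + 1)).adjugate 0 (Fin.last n)
      = (-1) ^ n * toeplitzDet w (ε + 1) n := by
  rw [adjugate_fin_succ_eq_det_submatrix, Fin.succAbove_zero, Fin.succAbove_last,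
    toeplitzMatrix_submatrix (ε := ε + 1) fun i j => by simp; ring]
  simp [det_toeplitzMatrix]

theorem adjugate_toeplitzMatrix_last_zero (n : ℕ) :
    (toeplitzMatrix w ε (n + 1)).adjugate (Fin.last n) 0
      = (-1) ^ n * toeplitzDet w (ε - 1) n := by
  rw [adjugate_fin_succ_eq_det_submatrix, Fin.succAbove_zero, Fin.succAbove_last,
    toeplitzMatrix_submatrix (ε := ε - 1) fun i j => by simp; ring]
  simp [det_toeplitzMatrix]

theorem toeplitzDet_add_two_mul (n : ℕ) :
    toeplitzDet w ε (n + 2) * toeplitzDet w ε n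
      = toeplitzDet w ε (n + 1) ^ 2
        - toeplitzDet w (ε + 1) (n + 1) * toeplitzDet w (ε - 1) (n + 1) := by
  have h := desnanot_jacobi (toeplitzMatrix w ε (n + 2))
  rw [toeplitzMatrix_submatrix_succ_castSucc, adjugate_toeplitzMatrix_zero_zero,
    adjugate_toeplitzMatrix_last_last, adjugate_toeplitzMatrix_zero_last,
    adjugate_toeplitzMatrix_last_zero, det_toeplitzMatrix, det_toeplitzMatrix,
    mul_mul_mul_comm, ← pow_add, Even.neg_one_pow ⟨_, rfl⟩, one_mul] at h
  linear_combination h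

end Toeplitz

/-- Baxter's recurrence: with reflection coefficients
`r_n = (-1)^n I_n[ζw]/I_n[w]` and `r̄_n = (-1)^n I_n[ζ⁻¹w]/I_n[w]`, the Toeplitz
determinants satisfy `I_{n+1} I_{n-1} / I_n² = 1 - r_n r̄_n` for `n ≥ 1`. -/
theorem baxter_toeplitz_recurrence (w : ℤ → ℂ)
    (hne : ∀ n : ℕ, 1 ≤ n → toeplitzDet w 0 n ≠ 0) (n : ℕ) (hn : 1 ≤ n) :
    toeplitzDet w 0 (n + 1) * toeplitzDet w 0 (n - 1) / (toeplitzDet w 0 n) ^ 2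
      = 1 - ((-1 : ℂ) ^ n * toeplitzDet w 1 n / toeplitzDet w 0 n) *
            ((-1 : ℂ) ^ n * toeplitzDet w (-1) n / toeplitzDet w 0 n) := by
  have hI := hne n hn
  obtain ⟨m, rfl⟩ := Nat.exists_eq_add_of_le' hn
  have h := toeplitzDet_add_two_mul w 0 m
  rw [zero_add, zero_sub] at h
  have hsign : ((-1 : ℂ) ^ (m + 1)) ^ 2 = 1 := by rw [← pow_mul, pow_mul', neg_one_sq, one_pow]
  rw [Nat.add_sub_cancel]
  field_simp
  linear_combination h + toeplitzDet w 1 (m + 1) * toeplitzDet w (-1) (m + 1) * hsign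
end

section
/- Christoffel–Darboux formula for bi-orthogonal polynomials on the unit circle: for z·ζ̄ ≠ 1 and n ≥ 0, Σ_{j=0}^n φ_j(z) φ̄_j(ζ̄) = (φ*_n(z) φ̄*_n(ζ̄) - z ζ̄ φ_n(z) φ̄_n(ζ̄)) / (1 - z ζ̄), where φ̄*_n(ζ̄) = ζ̄^n φ_n(1/ζ̄). -/
/-!
Put `D_n(z, w) = φ*_n(z) φ̄*_n(w) - z w φ_n(z) φ̄_n(w)`, where `p*` is `p.reverse`. The Szegő
recurrences and `κ_{n+1}² = κ_n² + φ_{n+1}(0) φ̄_{n+1}(0)` give the telescoping relation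
`D_{n+1} = D_n + (1 - z w) φ_{n+1}(z) φ̄_{n+1}(w)`, and `D_0 = (1 - z w) φ_0(z) φ̄_0(w)` because
constants are their own reversals. The recurrences only involve `φ_{n+1}` and `φ̄*_{n+1}`; the
companion recurrences for `φ*_{n+1}` and `φ̄_{n+1}` needed in the telescoping step are obtained
by reflecting them at degree `n + 1`.
-/

open Polynomial

namespace Polynomial

variable {R : Type*} [Semiring R] {n : ℕ} {p q : R[X]}

theorem reflect_succ_X_mul (hp : p.natDegree ≤ n) : (X * p).reflect (n + 1) = p.reflect n := by
  rw [add_comm, reflect_mul X p natDegree_X_le hp, reflect_one_X, one_mul]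

theorem reflect_succ_reflect (hp : p.natDegree ≤ n) : (p.reflect n).reflect (n + 1) = X * p := by
  rw [← reflect_succ_X_mul hp, reflect_reflect]

theorem reflect_succ_C_mul_X_mul_add_C_mul_reflect (b c : R) (hp : p.natDegree ≤ n)
    (hq : q.natDegree ≤ n) :
    (C b * (X * p) + C c * q.reflect n).reflect (n + 1) = C b * p.reflect n + C c * (X * q) := by
  rw [reflect_add, reflect_C_mul, reflect_C_mul, reflect_succ_X_mul hp, reflect_succ_reflect hq]

theorem reverse_eq_reflect_of_natDegree_eq (hp : p.natDegree = n) : p.reverse = p.reflect n := by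
  rw [reverse, hp]

end Polynomial

section SzegoRecurrence

variable {R : Type*} [CommRing R] (κ : ℕ → R) (F G : ℕ → R[X]) (n : ℕ)

def SzegoRecurrence : Prop :=
  C (κ n) * F (n + 1) = C (κ (n + 1)) * (X * F n) + C ((F (n + 1)).coeff 0) * (G n).reverse

def SzegoRecurrenceReverse : Prop :=
  C (κ n) * (F (n + 1)).reverse
    = C (κ (n + 1)) * (F n).reverse + C ((F (n + 1)).coeff 0) * (X * G n)

variable {κ F G n}

theorem SzegoRecurrence.reverse (hF : ∀ m, (F m).natDegree = m) (hG : (G n).natDegree = n)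
    (h : SzegoRecurrence κ F G n) : SzegoRecurrenceReverse κ F G n := by
  have := congrArg (reflect (n + 1)) h
  rwa [reflect_C_mul, reverse_eq_reflect_of_natDegree_eq hG,
    reflect_succ_C_mul_X_mul_add_C_mul_reflect _ _ (hF n).le hG.le,
    ← reverse_eq_reflect_of_natDegree_eq (hF (n + 1)), ← reverse_eq_reflect_of_natDegree_eq (hF n)]
    at this

theorem SzegoRecurrenceReverse.unreverse (hF : ∀ m, (F m).natDegree = m)
    (hG : (G n).natDegree = n) (h : SzegoRecurrenceReverse κ F G n) : SzegoRecurrence κ F G n := by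
  have := congrArg (reflect (n + 1)) h
  rwa [reflect_C_mul, reverse_eq_reflect_of_natDegree_eq (hF (n + 1)), reflect_reflect,
    reverse_eq_reflect_of_natDegree_eq (hF n), add_comm (C (κ (n + 1)) * _),
    reflect_succ_C_mul_X_mul_add_C_mul_reflect _ _ hG.le (hF n).le,
    add_comm (C ((F (n + 1)).coeff 0) * _), ← reverse_eq_reflect_of_natDegree_eq hG] at this

end SzegoRecurrence

section ChristoffelDarboux

variable {R : Type*} [CommRing R] {κ : ℕ → R} {φ φb : ℕ → R[X]}

noncomputable def christoffelDarbouxNumerator (φ φb : ℕ → R[X]) (n : ℕ) (z w : R) : R :=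
  (φb n).reverse.eval z * (φ n).reverse.eval w - z * w * (φ n).eval z * (φb n).eval w

theorem christoffelDarbouxNumerator_zero (hφ : (φ 0).natDegree = 0) (hφb : (φb 0).natDegree = 0)
    (z w : R) :
    christoffelDarbouxNumerator φ φb 0 z w = (1 - z * w) * ((φ 0).eval z * (φb 0).eval w) := by
  rw [christoffelDarbouxNumerator, eq_C_of_natDegree_eq_zero hφ, eq_C_of_natDegree_eq_zero hφb]
  simp only [reverse_C, eval_C]
  ring

theorem christoffelDarbouxNumerator_succ [IsDomain R] {m : ℕ} (hκ : κ m ≠ 0)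
    (hrel : κ (m + 1) ^ 2 = κ m ^ 2 + (φ (m + 1)).coeff 0 * (φb (m + 1)).coeff 0)
    (h : SzegoRecurrence κ φ φb m) (h' : SzegoRecurrenceReverse κ φ φb m)
    (hb : SzegoRecurrence κ φb φ m) (hb' : SzegoRecurrenceReverse κ φb φ m) (z w : R) :
    christoffelDarbouxNumerator φ φb (m + 1) z w
      = christoffelDarbouxNumerator φ φb m z w
        + (1 - z * w) * ((φ (m + 1)).eval z * (φb (m + 1)).eval w) := by
  have e := congrArg (eval z) h
  have e' := congrArg (eval w) h'
  have eb := congrArg (eval w) hb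
  have eb' := congrArg (eval z) hb'
  simp only [eval_add, eval_mul, eval_C, eval_X] at e e' eb eb'
  unfold christoffelDarbouxNumerator
  apply mul_left_cancel₀ (pow_ne_zero 2 hκ)
  linear_combination (κ m * (φ (m + 1)).reverse.eval w) * eb'
    + (κ (m + 1) * (φb m).reverse.eval z + (φb (m + 1)).coeff 0 * z * (φ m).eval z) * e'
    - (κ m * (φb (m + 1)).eval w) * e
    - (κ (m + 1) * z * (φ m).eval z + (φ (m + 1)).coeff 0 * (φb m).reverse.eval z) * eb
    + ((φb m).reverse.eval z * (φ m).reverse.eval w - z * w * (φ m).eval z * (φb m).eval w) * hrel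

theorem one_sub_mul_sum_eq_christoffelDarbouxNumerator [IsDomain R] (hκ : ∀ n, κ n ≠ 0)
    (hdeg : ∀ n, (φ n).natDegree = n ∧ (φb n).natDegree = n)
    (hrel : ∀ n, κ (n + 1) ^ 2 = κ n ^ 2 + (φ (n + 1)).coeff 0 * (φb (n + 1)).coeff 0)
    (h : ∀ n, SzegoRecurrence κ φ φb n) (hb' : ∀ n, SzegoRecurrenceReverse κ φb φ n)
    (n : ℕ) (z w : R) :
    (1 - z * w) * ∑ j ∈ Finset.range (n + 1), (φ j).eval z * (φb j).eval w
      = christoffelDarbouxNumerator φ φb n z w := by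
  have hφ m := (hdeg m).1
  have hφb m := (hdeg m).2
  induction n with
  | zero => rw [Finset.sum_range_one, christoffelDarbouxNumerator_zero (hφ 0) (hφb 0)]
  | succ m ih =>
    rw [Finset.sum_range_succ, mul_add, ih, christoffelDarbouxNumerator_succ (hκ m) (hrel m) (h m)
      ((h m).reverse hφ (hφb m)) ((hb' m).unreverse hφb (hφ m)) (hb' m)]

end ChristoffelDarboux

theorem christoffel_darboux_biorthogonal_general (φ φb : ℕ → Polynomial ℂ) (κ : ℕ → ℂ)
    (hκ : ∀ n, κ n ≠ 0)
    (hdeg : ∀ n, (φ n).natDegree = n ∧ (φb n).natDegree = n)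
    (hrel : ∀ n, (κ (n + 1)) ^ 2 = (κ n) ^ 2 + (φ (n + 1)).coeff 0 * (φb (n + 1)).coeff 0)
    (hrec1 : ∀ n, C (κ n) * φ (n + 1)
        = C (κ (n + 1)) * (X * φ n) + C ((φ (n + 1)).coeff 0) * (φb n).reverse)
    (hrec2 : ∀ n, C (κ n) * (φb (n + 1)).reverse
        = C (κ (n + 1)) * (φb n).reverse + C ((φb (n + 1)).coeff 0) * (X * φ n))
    (n : ℕ) (z w : ℂ) (hzw : z * w ≠ 1) :
    ∑ j ∈ Finset.range (n + 1), (φ j).eval z * (φb j).eval w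
      = (((φb n).reverse.eval z) * ((φ n).reverse.eval w)
          - z * w * (φ n).eval z * (φb n).eval w) / (1 - z * w) := by
  rw [eq_div_iff (sub_ne_zero.2 hzw.symm), mul_comm]
  exact one_sub_mul_sum_eq_christoffelDarbouxNumerator hκ hdeg hrel hrec1 hrec2 n z w

/-- Christoffel–Darboux formula for bi-orthogonal polynomials on the unit circle:
`∑_{j=0}^n φ_j(z) φ̄_j(w) = (φ*_n(z) φ̄*_n(w) - z w φ_n(z) φ̄_n(w))/(1 - z w)` for `z w ≠ 1`,
where `φ*_n(z) = z^n φ̄_n(1/z) = (φb n).reverse` and `φ̄*_n(w) = w^n φ_n(1/w) = (φ n).reverse`. -/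
theorem christoffel_darboux_biorthogonal (φ φb : ℕ → Polynomial ℂ) (κ : ℕ → ℂ)
    (hκ : ∀ n, κ n ≠ 0)
    (hdeg : ∀ n, (φ n).natDegree = n ∧ (φb n).natDegree = n)
    (hlead : ∀ n, (φ n).leadingCoeff = κ n ∧ (φb n).leadingCoeff = κ n)
    (hrel : ∀ n, (κ (n + 1)) ^ 2 = (κ n) ^ 2 + (φ (n + 1)).coeff 0 * (φb (n + 1)).coeff 0)
    (hrec1 : ∀ n, C (κ n) * φ (n + 1)
        = C (κ (n + 1)) * (X * φ n) + C ((φ (n + 1)).coeff 0) * (φb n).reverse)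
    (hrec2 : ∀ n, C (κ n) * (φb (n + 1)).reverse
        = C (κ (n + 1)) * (φb n).reverse + C ((φb (n + 1)).coeff 0) * (X * φ n))
    (n : ℕ) (z w : ℂ) (hzw : z * w ≠ 1) :
    ∑ j ∈ Finset.range (n + 1), (φ j).eval z * (φb j).eval w
      = (((φb n).reverse.eval z) * ((φ n).reverse.eval w)
          - z * w * (φ n).eval z * (φb n).eval w) / (1 - z * w) :=
  christoffel_darboux_biorthogonal_general φ φb κ hκ hdeg hrel hrec1 hrec2 n z w hzw
end

section
/- Casoratian identity: if (φ_n, φ*_n) and (ε_n, -ε*_n) are two solution pairs of the coupled recurrences κ_n u_{n+1} = κ_{n+1} z u_n + φ_{n+1}(0) v_n, κ_n v_{n+1} = κ_{n+1} v_n + φ̄_{n+1}(0) z u_n (with signs of φ_{n+1}(0), φ̄_{n+1}(0) reversed for (ε_n, ε*_n)), and the identity φ_n(z) ε*_n(z) + ε_n(z) φ*_n(z) = 2 z^n holds at n = 0, then φ_n(z) ε*_n(z) + ε_n(z) φ*_n(z) = 2 z^n for all n ≥ 0. -/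
/-! Expanding `κ_n² W_{n+1}` for the Casoratian `W_n = φ_n ε*_n + ε_n φ*_n` through the four
recurrences, the cross terms cancel and what remains is `(κ_{n+1}² - φ_{n+1}(0) φ̄_{n+1}(0)) z W_n`,
which is `κ_n² z W_n`. Hence `W_{n+1} = z W_n`, and `W_n = z^n W_0 = 2 z^n`. -/

theorem casoratian_succ {K : Type*} [Field K] {z κ κ' a b p ps e es p' ps' e' es' : K}
    (hκ : κ ≠ 0) (hrel : κ' ^ 2 = κ ^ 2 + a * b)
    (hp : κ * p' = κ' * z * p + a * ps) (hps : κ * ps' = κ' * ps + b * z * p)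
    (he : κ * e' = κ' * z * e - a * es) (hes : κ * es' = κ' * es - b * z * e) :
    p' * es' + e' * ps' = z * (p * es + e * ps) := by
  have hscaled : κ ^ 2 * (p' * es' + e' * ps') = κ ^ 2 * (z * (p * es + e * ps)) := by
    linear_combination (κ * es') * hp + (κ' * z * p + a * ps) * hes + (κ * ps') * he
      + (κ' * z * e - a * es) * hps + z * (p * es + e * ps) * hrel
  exact mul_left_cancel₀ (pow_ne_zero 2 hκ) hscaled

theorem eq_pow_mul_of_succ_eq_mul {M : Type*} [Monoid M] {u : ℕ → M} {z : M}
    (h : ∀ n, u (n + 1) = z * u n) (n : ℕ) : u n = z ^ n * u 0 := by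
  induction n with
  | zero => rw [pow_zero, one_mul]
  | succ n ih => rw [h, ih, ← mul_assoc, pow_succ']

/-- Casoratian identity: if `(φ_n, φ*_n)` satisfies the coupled recurrences and
`(ε_n, ε*_n)` satisfies the same recurrences with the signs of `φ_{n+1}(0)` and
`φ̄_{n+1}(0)` reversed, with `κ_{n+1}² = κ_n² + φ_{n+1}(0) φ̄_{n+1}(0)`, and the identity
`φ_0 ε*_0 + ε_0 φ*_0 = 2 z⁰` holds, then `φ_n ε*_n + ε_n φ*_n = 2 z^n` for all `n`. -/
theorem casoratian_identity (z : ℂ) (κ a b φ φs ε εs : ℕ → ℂ)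
    (hκ : ∀ n, κ n ≠ 0)
    (hrel : ∀ n, (κ (n + 1)) ^ 2 = (κ n) ^ 2 + a (n + 1) * b (n + 1))
    (hφ : ∀ n, κ n * φ (n + 1) = κ (n + 1) * z * φ n + a (n + 1) * φs n)
    (hφs : ∀ n, κ n * φs (n + 1) = κ (n + 1) * φs n + b (n + 1) * z * φ n)
    (hε : ∀ n, κ n * ε (n + 1) = κ (n + 1) * z * ε n - a (n + 1) * εs n)
    (hεs : ∀ n, κ n * εs (n + 1) = κ (n + 1) * εs n - b (n + 1) * z * ε n)
    (hbase : φ 0 * εs 0 + ε 0 * φs 0 = 2 * z ^ (0 : ℕ)) :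
    ∀ n : ℕ, φ n * εs n + ε n * φs n = 2 * z ^ n := by
  intro n
  have hstep (m : ℕ) : φ (m + 1) * εs (m + 1) + ε (m + 1) * φs (m + 1)
      = z * (φ m * εs m + ε m * φs m) :=
    casoratian_succ (hκ m) (hrel m) (hφ m) (hφs m) (hε m) (hεs m)
  rw [eq_pow_mul_of_succ_eq_mul (u := fun m ↦ φ m * εs m + ε m * φs m) hstep n, hbase,
    pow_zero, mul_one, mul_comm]
end

section
/- For k > 1 and t = k^{-2}, the Fourier coefficients F_n = ∫_𝕋 (dz/2πiz) z^n S(z) of the scattering function S(z) = f₋(z)/f₊(z) = (1 - k^{-1}z^{-1})^{-1/2}(1 - k^{-1}z)^{-1/2} are given by F_n = [Γ(|n|+1/2)/(√π · |n|!)] · k^{-|n|} · ₂F₁(1/2, |n|+1/2; |n|+1; k^{-2}) for all n ∈ ℤ. -/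
/-!
Put `r = k⁻¹ < 1`. On the unit circle both factors of the integrand are binomial series
`(1 - x)^(-1/2) = ∑ₘ cₘ xᵐ`, `cₘ = (1/2)ₘ / m!`, at `x = r e^{∓iθ}`, absolutely convergent since
`|x| = r < 1`. Their product is an absolutely convergent trigonometric series, so it may be
integrated termwise, and by orthogonality of the `e^{ijθ}` only the terms with `p - q = n` survive.
The integrand is even in `θ`, so with `N = |n|` this gives `F_n = ∑ₘ c_{m+N} cₘ r^{2m+N}`. The
identities `(1/2)_{N+m} = (1/2)_N (N+1/2)ₘ`, `(N+m)! = N! (N+1)ₘ` and `Γ(N+1/2) = (1/2)_N √π`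
turn this series into the hypergeometric one.
-/

open Real intervalIntegral

/-- The Gauss hypergeometric function `₂F₁(a,b;c;t)` as a power series. -/
noncomputable def gaussHyp (a b c t : ℝ) : ℝ :=
  ∑' n : ℕ, ((ascPochhammer ℝ n).eval a * (ascPochhammer ℝ n).eval b /
    (ascPochhammer ℝ n).eval c) * t ^ n / (n.factorial : ℝ)

open Complex Polynomial

theorem Ring.choose_add_natCast_sub_one_eq_ascPochhammer_div {K : Type*} [Field K] [CharZero K]
    (a : K) (n : ℕ) :
    Ring.choose (a + n - 1) n = (ascPochhammer K n).eval a / n.factorial := by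
  rw [Ring.choose_eq_smul, descPochhammer_smeval_eq_ascPochhammer, ascPochhammer_smeval_eq_eval,
    smul_eq_mul, div_eq_inv_mul]
  congr 3
  ring

theorem Real.Gamma_add_nat_eq_ascPochhammer_mul {x : ℝ} (hx : ∀ k : ℕ, x + k ≠ 0) (n : ℕ) :
    Gamma (x + n) = (ascPochhammer ℝ n).eval x * Gamma x := by
  induction n with
  | zero => simp
  | succ n ih =>
    rw [Nat.cast_succ, ← add_assoc, Gamma_add_one (hx n), ih, ascPochhammer_succ_eval]
    ring

theorem ascPochhammer_add_eval {S : Type*} [CommSemiring S] (a : S) (n m : ℕ) :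
    (ascPochhammer S (n + m)).eval a =
      (ascPochhammer S n).eval a * (ascPochhammer S m).eval (a + n) := by
  rw [← ascPochhammer_mul, eval_mul, eval_comp, eval_add, eval_X, eval_natCast]

noncomputable def invSqrtCoeff (m : ℕ) : ℝ := (ascPochhammer ℝ m).eval (1 / 2) / m.factorial

lemma invSqrtCoeff_nonneg (m : ℕ) : 0 ≤ invSqrtCoeff m :=
  div_nonneg (ascPochhammer_pos m _ (by norm_num)).le (Nat.cast_nonneg _)

lemma hasSum_invSqrtCoeff_mul_pow {x : ℂ} (hx : ‖x‖ < 1) :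
    HasSum (fun m ↦ (invSqrtCoeff m : ℂ) * x ^ m) ((1 - x) ^ (-(1 / 2 : ℂ))) := by
  have h := (one_div_one_sub_cpow_hasFPowerSeriesOnBall_zero (1 / 2)).hasSum
    (y := x) (by simpa [← ofReal_norm] using hx)
  simp only [FormalMultilinearSeries.ofScalars_apply_eq, zero_add, one_div, ← cpow_neg,
    smul_eq_mul, Ring.choose_add_natCast_sub_one_eq_ascPochhammer_div] at h
  rw [one_div]
  refine h.congr_fun fun m ↦ ?_
  have hcast : (((ascPochhammer ℝ m).eval (1 / 2) : ℝ) : ℂ) =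
      (ascPochhammer ℂ m).eval ((1 / 2 : ℝ) : ℂ) := by
    rw [ascPochhammer_eval₂ ofRealHom]
    exact (eval₂_at_apply ofRealHom _).symm
  rw [invSqrtCoeff, ofReal_div, hcast, ofReal_natCast]
  norm_num

lemma summable_norm_invSqrtCoeff_mul_pow {x : ℂ} (hx : ‖x‖ < 1) :
    Summable fun m ↦ ‖(invSqrtCoeff m : ℂ) * x ^ m‖ := by
  have h := (hasSum_invSqrtCoeff_mul_pow (x := (‖x‖ : ℂ)) (by simpa using hx)).summable
  simp only [norm_mul, norm_pow, Complex.norm_real, norm_of_nonneg (invSqrtCoeff_nonneg _)]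
  exact Complex.summable_ofReal.mp (by exact_mod_cast h)

lemma integral_exp_I_int_mul (j : ℤ) :
    ∫ θ in (-π)..π, Complex.exp (I * j * θ) = if j = 0 then 2 * (π : ℂ) else 0 := by
  split_ifs with hj
  · simp [hj, two_mul]
  have hIj : I * j ≠ 0 := by simp [hj]
  rw [integral_exp_mul_complex hIj, div_eq_zero_iff, sub_eq_zero]
  left
  have : I * j * π = I * j * (-π : ℝ) + j * (2 * π * I) := by push_cast; ring
  rw [this, Complex.exp_add, Complex.exp_int_mul_two_pi_mul_I, mul_one]

theorem hasSum_integral_fourier_series {ι : Type*} [Countable ι] {a : ι → ℂ} {j : ι → ℤ}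
    {f : ℝ → ℂ} (ha : Summable fun i ↦ ‖a i‖)
    (hf : ∀ θ : ℝ, HasSum (fun i ↦ a i * Complex.exp (I * j i * θ)) (f θ)) :
    HasSum (fun i ↦ if j i = 0 then 2 * π * a i else 0) (∫ θ in (-π)..π, f θ) := by
  have h := hasSum_integral_of_dominated_convergence (μ := MeasureTheory.volume) (a := -π) (b := π)
    (fun i _ ↦ ‖a i‖) (fun i ↦ by fun_prop) (fun i ↦ ?_) (.of_forall fun _ _ ↦ ha)
    intervalIntegrable_const (.of_forall fun θ _ ↦ hf θ)
  · refine h.congr_fun fun i ↦ ?_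
    rw [intervalIntegral.integral_const_mul, integral_exp_I_int_mul]
    split_ifs <;> ring
  · refine .of_forall fun θ _ ↦ ?_
    rw [norm_mul, mul_comm (I : ℂ), mul_comm _ (θ : ℂ), ← mul_assoc]
    norm_cast
    rw [Complex.norm_exp_ofReal_mul_I, mul_one]

noncomputable def scatteringIntegrand (r : ℂ) (n : ℤ) (θ : ℝ) : ℂ :=
  Complex.exp (I * n * θ) * (1 - r * Complex.exp (-(I * θ))) ^ (-((1 : ℂ) / 2)) *
    (1 - r * Complex.exp (I * θ)) ^ (-((1 : ℂ) / 2))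

noncomputable def scatteringCoeff (r : ℂ) (n : ℤ) : ℂ :=
  (1 / (2 * (π : ℂ))) * ∫ θ in (-π)..π, scatteringIntegrand r n θ

lemma scatteringIntegrand_neg (r : ℂ) (n : ℤ) (θ : ℝ) :
    scatteringIntegrand r (-n) θ = scatteringIntegrand r n (-θ) := by
  simp only [scatteringIntegrand]
  push_cast
  ring_nf

lemma scatteringCoeff_neg (r : ℂ) (n : ℤ) : scatteringCoeff r (-n) = scatteringCoeff r n := by
  simp only [scatteringCoeff, scatteringIntegrand_neg, intervalIntegral.integral_comp_neg, neg_neg]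

lemma hasSum_scatteringIntegrand {r : ℂ} (hr : ‖r‖ < 1) (n : ℤ) (θ : ℝ) :
    HasSum (fun p : ℕ × ℕ ↦ invSqrtCoeff p.1 * invSqrtCoeff p.2 * r ^ (p.1 + p.2) *
      Complex.exp (I * (n - p.1 + p.2 : ℤ) * θ)) (scatteringIntegrand r n θ) := by
  have hnorm (s : ℝ) : ‖r * Complex.exp (I * s)‖ < 1 := by
    rwa [norm_mul, mul_comm I, Complex.norm_exp_ofReal_mul_I, mul_one]
  have hneg : -(I * θ) = I * ((-θ : ℝ) : ℂ) := by push_cast; ring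
  have h := ((hasSum_invSqrtCoeff_mul_pow (hnorm (-θ))).mul (hasSum_invSqrtCoeff_mul_pow (hnorm θ))
    ((summable_norm_invSqrtCoeff_mul_pow (hnorm (-θ))).mul_norm
      (summable_norm_invSqrtCoeff_mul_pow (hnorm θ))).of_norm).mul_left (Complex.exp (I * n * θ))
  rw [scatteringIntegrand, mul_assoc, hneg]
  refine h.congr_fun fun p ↦ ?_
  have hexp : Complex.exp (I * (n - p.1 + p.2 : ℤ) * θ) = Complex.exp (I * n * θ) *
      Complex.exp (p.1 * (I * (-θ : ℝ))) * Complex.exp (p.2 * (I * θ)) := by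
    rw [← Complex.exp_add, ← Complex.exp_add]
    push_cast
    ring_nf
  rw [hexp, mul_pow, mul_pow, ← Complex.exp_nat_mul, ← Complex.exp_nat_mul, pow_add]
  ring

lemma scatteringCoeff_natCast {r : ℂ} (hr : ‖r‖ < 1) (N : ℕ) :
    scatteringCoeff r N = ∑' m : ℕ, invSqrtCoeff (m + N) * invSqrtCoeff m * r ^ (2 * m + N) := by
  have hsum : Summable fun p : ℕ × ℕ ↦
      ‖(invSqrtCoeff p.1 * invSqrtCoeff p.2 * r ^ (p.1 + p.2) : ℂ)‖ :=
    ((summable_norm_invSqrtCoeff_mul_pow hr).mul_norm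
      (summable_norm_invSqrtCoeff_mul_pow hr)).congr fun p ↦ by rw [pow_add]; ring_nf
  have hint := (hasSum_integral_fourier_series hsum (hasSum_scatteringIntegrand hr N)).tsum_eq
  have hsupport : Function.support (fun p : ℕ × ℕ ↦ if (N - p.1 + p.2 : ℤ) = 0 then
      2 * π * (invSqrtCoeff p.1 * invSqrtCoeff p.2 * r ^ (p.1 + p.2) : ℂ) else 0) ⊆
        Set.range fun m ↦ (m + N, m) := by
    intro p hp
    refine ⟨p.2, Prod.ext ?_ rfl⟩
    have : (N - p.1 + p.2 : ℤ) = 0 := by by_contra h; simp [h] at hp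
    dsimp only
    omega
  rw [scatteringCoeff, ← hint, ← (Function.Injective.tsum_eq _ hsupport), ← tsum_mul_left]
  · refine tsum_congr fun m ↦ ?_
    rw [if_pos (by push_cast; ring)]
    field_simp
    ring_nf
  · intro m m' h
    simpa using congrArg Prod.snd h

lemma tsum_invSqrtCoeff_mul_eq_gaussHyp (t : ℝ) (N : ℕ) :
    ∑' m : ℕ, invSqrtCoeff (m + N) * invSqrtCoeff m * t ^ (2 * m + N) =
      Real.Gamma (N + 1 / 2) / (√π * N.factorial) * t ^ N *
        gaussHyp (1 / 2) (N + 1 / 2) (N + 1) (t ^ 2) := by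
  rw [gaussHyp, ← tsum_mul_left]
  refine tsum_congr fun m ↦ ?_
  have hGamma : Real.Gamma (N + 1 / 2) = (ascPochhammer ℝ N).eval (1 / 2) * √π := by
    rw [add_comm, Real.Gamma_add_nat_eq_ascPochhammer_mul (fun k ↦ by positivity),
      Real.Gamma_one_half_eq]
  have hfact := factorial_mul_ascPochhammer ℝ N m
  have hpos : 0 < (ascPochhammer ℝ m).eval ((N : ℝ) + 1) := ascPochhammer_pos m _ (by positivity)
  rw [hGamma, invSqrtCoeff, invSqrtCoeff, add_comm m N, ascPochhammer_add_eval, ← hfact,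
    add_comm (1 / 2 : ℝ)]
  field_simp
  ring

/-- The Fourier coefficients of the scattering function
`S(z) = (1-k⁻¹z⁻¹)^{-1/2}(1-k⁻¹z)^{-1/2}`:
`F_n = [Γ(|n|+1/2)/(√π |n|!)] k^{-|n|} ₂F₁(1/2,|n|+1/2;|n|+1;k^{-2})` for all `n ∈ ℤ`. -/
theorem scattering_fourier_coeff (k : ℝ) (hk : 1 < k) (n : ℤ) :
    (1 / (2 * (π : ℂ))) * ∫ θ in (-π)..π,
        Complex.exp (Complex.I * n * θ) *
          (1 - (k : ℂ)⁻¹ * Complex.exp (-(Complex.I * θ))) ^ (-((1 : ℂ) / 2)) *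
          (1 - (k : ℂ)⁻¹ * Complex.exp (Complex.I * θ)) ^ (-((1 : ℂ) / 2))
      = ((Real.Gamma ((n.natAbs : ℝ) + 1/2) / (Real.sqrt π * (n.natAbs.factorial : ℝ)) *
          k ^ (-|n|) *
          gaussHyp (1/2) ((n.natAbs : ℝ) + 1/2) ((n.natAbs : ℝ) + 1) (k ^ (-2 : ℤ)) : ℝ) : ℂ) := by
  have hr : ‖((k⁻¹ : ℝ) : ℂ)‖ < 1 := by
    rw [norm_real, norm_of_nonneg (by positivity)]
    exact inv_lt_one_of_one_lt₀ hk
  have hcoeff : scatteringCoeff (k⁻¹ : ℝ) n = scatteringCoeff (k⁻¹ : ℝ) n.natAbs := by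
    rcases Int.natAbs_eq n with h | h
    · nth_rw 1 [h]
    · nth_rw 1 [h]
      exact scatteringCoeff_neg _ _
  have hpow : k ^ (-|n|) = k⁻¹ ^ n.natAbs := by
    rw [Int.abs_eq_natAbs, zpow_neg, zpow_natCast, inv_pow]
  have hsq : k ^ (-2 : ℤ) = k⁻¹ ^ 2 := by
    rw [zpow_neg, zpow_ofNat, inv_pow]
  rw [← ofReal_inv]
  change scatteringCoeff ((k⁻¹ : ℝ) : ℂ) n = _
  rw [hcoeff, scatteringCoeff_natCast hr, hpow, hsq, ← tsum_invSqrtCoeff_mul_eq_gaussHyp,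
    ofReal_tsum]
  push_cast
  rfl
end

section
/- For k > 1 and n ∈ ℤ, the Fourier coefficients F̄_n = ∫_𝕋 (dz/2πiz) z^{-n} (1/S(z)) of the reciprocal scattering function 1/S(z) = (1 - k^{-1}z^{-1})^{1/2}(1 - k^{-1}z)^{1/2} are F̄_n = -[Γ(|n|-1/2)/(2√π · |n|!)] · k^{-|n|} · ₂F₁(-1/2, |n|-1/2; |n|+1; k^{-2}). -/
open Real intervalIntegral

/-!
For `|q| < 1` the binomial series gives `(1 - q e^{∓iθ})^a = ∑ c_m q^m e^{∓imθ}` with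
`c_m = (-a)_m / m!`, absolutely convergent on the circle. Multiplying the two series and
integrating termwise, only the pairs `(j, l)` with `l - j = n` survive, so with `N = |n|` the
`n`-th Fourier coefficient is `∑_m c_m c_{m+N} q^{2m+N}`. Splitting `(-a)_{m+N} = (-a)_N (N-a)_m`
and `(m+N)! = N! (N+1)_m` turns this into `c_N q^N ₂F₁(-a, N-a; N+1; q²)`, and for `a = 1/2`
one has `c_N = -Γ(N-1/2) / (2√π N!)` because `Γ(-1/2) = -2√π`.
-/

open scoped Nat

noncomputable def oneSubPowCoeff (a : ℝ) (m : ℕ) : ℝ := (ascPochhammer ℝ m).eval (-a) / m !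

lemma oneSubPowCoeff_eq_neg_one_pow_mul_choose (a : ℝ) (m : ℕ) :
    oneSubPowCoeff a m = (-1) ^ m * Ring.choose a m := by
  rw [oneSubPowCoeff, Ring.choose_eq_smul, ascPochhammer_eval_neg_eq_descPochhammer,
    Polynomial.descPochhammer_smeval_eq_ascPochhammer, Polynomial.ascPochhammer_smeval_eq_eval,
    descPochhammer_eval_eq_ascPochhammer, smul_eq_mul]
  ring

lemma enorm_neg_lt_one_of_norm_lt_one {E : Type*} [SeminormedAddCommGroup E] {w : E}
    (hw : ‖w‖ < 1) : ‖-w‖ₑ < 1 := by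
  rwa [← ofReal_norm, ENNReal.ofReal_lt_one, norm_neg]

lemma binomialSeries_apply_neg_eq_oneSubPowCoeff (a : ℝ) (w : ℂ) (m : ℕ) :
    (binomialSeries ℂ (a : ℂ) m fun _ => -w) = (oneSubPowCoeff a m : ℂ) * w ^ m := by
  rw [binomialSeries, FormalMultilinearSeries.ofScalars_apply_eq, smul_eq_mul,
    oneSubPowCoeff_eq_neg_one_pow_mul_choose, neg_pow]
  push_cast
  ring

lemma hasSum_oneSubPowCoeff_mul_pow (a : ℝ) {w : ℂ} (hw : ‖w‖ < 1) :
    HasSum (fun m => (oneSubPowCoeff a m : ℂ) * w ^ m) ((1 - w) ^ (a : ℂ)) := by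
  have h := Complex.one_add_cpow_hasFPowerSeriesOnBall_zero (a := (a : ℂ)).hasSum
    (y := -w) (by simpa [edist_zero_right] using enorm_neg_lt_one_of_norm_lt_one hw)
  rw [zero_add, ← sub_eq_add_neg] at h
  simpa only [binomialSeries_apply_neg_eq_oneSubPowCoeff] using h

lemma summable_norm_oneSubPowCoeff_mul_pow (a : ℝ) {w : ℂ} (hw : ‖w‖ < 1) :
    Summable fun m => ‖(oneSubPowCoeff a m : ℂ) * w ^ m‖ := by
  have h := (binomialSeries ℂ (a : ℂ)).summable_norm_apply (x := -w)
    (by simpa [edist_zero_right] using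
      (enorm_neg_lt_one_of_norm_lt_one hw).trans_le binomialSeries_radius_ge_one)
  simpa only [binomialSeries_apply_neg_eq_oneSubPowCoeff] using h

open Complex in
lemma integral_exp_int_mul_I (m : ℤ) :
    ∫ θ in (-π)..π, exp (I * m * θ) = if m = 0 then (2 * π : ℂ) else 0 := by
  split_ifs with hm
  · simp only [hm, Int.cast_zero, mul_zero, zero_mul, Complex.exp_zero, integral_const,
      sub_neg_eq_add, real_smul, ofReal_add, mul_one]
    ring
  · have hc : I * m ≠ 0 := mul_ne_zero I_ne_zero (Int.cast_ne_zero.2 hm)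
    rw [integral_exp_mul_complex hc]
    have h1 : I * m * π = m * (π * I) := by ring
    have h2 : I * m * ((-π : ℝ) : ℂ) = (-m : ℤ) * (π * I) := by push_cast; ring
    rw [h1, h2, exp_int_mul, exp_int_mul, exp_pi_mul_I, zpow_neg, ← inv_zpow, inv_neg, inv_one,
      sub_self, zero_div]

open Complex in
lemma integral_exp_mul_tsum_mul_exp {ι : Type*} [Countable ι] {f : ι → ℂ}
    (hf : Summable fun i => ‖f i‖) (e : ι → ℤ) (n : ℤ) :
    ∫ θ in (-π)..π, exp (-(I * n * θ)) * ∑' i, f i * exp (I * e i * θ)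
      = 2 * π * ∑' i : {i | e i = n}, f i := by
  let g : ι → C(ℝ, ℂ) := fun i => ⟨fun θ => f i * exp (I * (e i - n : ℤ) * θ), by fun_prop⟩
  have hg : ∀ i θ, ‖g i θ‖ = ‖f i‖ := fun i θ => by
    simp [g, norm_exp]
  have hg_sum : Summable fun i => ‖(g i).restrict (⟨Set.uIcc (-π) π, isCompact_uIcc⟩ :
      TopologicalSpace.Compacts ℝ)‖ :=
    hf.of_nonneg_of_le (fun _ => norm_nonneg _) fun i =>
      (ContinuousMap.norm_le _ (norm_nonneg _)).2 fun θ => (hg i θ).le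
  calc ∫ θ in (-π)..π, exp (-(I * n * θ)) * ∑' i, f i * exp (I * e i * θ)
      = ∫ θ in (-π)..π, ∑' i, g i θ := by
        congr 1
        funext θ
        rw [← tsum_mul_left]
        congr 1
        funext i
        rw [mul_left_comm, ← Complex.exp_add]
        simp only [g, ContinuousMap.coe_mk]
        push_cast
        ring_nf
    _ = ∑' i, f i * if e i = n then (2 * π : ℂ) else 0 := by
        rw [← intervalIntegral.tsum_intervalIntegral_eq_of_summable_norm hg_sum]
        congr 1
        funext i
        simp only [g, ContinuousMap.coe_mk, intervalIntegral.integral_const_mul,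
          integral_exp_int_mul_I, sub_eq_zero]
    _ = 2 * π * ∑' i : {i | e i = n}, f i := by
        rw [tsum_subtype, ← tsum_mul_left]
        congr 1
        funext i
        by_cases hi : e i = n <;> simp [hi, mul_comm]

open Complex in
lemma one_sub_cpow_mul_one_sub_cpow_eq_tsum (a : ℝ) {q : ℝ} (hq : |q| < 1) (θ : ℝ) :
    (1 - q * exp (-(I * θ))) ^ (a : ℂ) * (1 - q * exp (I * θ)) ^ (a : ℂ)
      = ∑' p : ℕ × ℕ, ((oneSubPowCoeff a p.1 * oneSubPowCoeff a p.2 * q ^ (p.1 + p.2) : ℝ) : ℂ) *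
          exp (I * ((p.2 : ℤ) - p.1 : ℤ) * θ) := by
  have h₁ : ‖(q : ℂ) * exp (-(I * θ))‖ < 1 := by simpa [norm_exp] using hq
  have h₂ : ‖(q : ℂ) * exp (I * θ)‖ < 1 := by simpa [norm_exp] using hq
  rw [← (hasSum_oneSubPowCoeff_mul_pow a h₁).tsum_eq,
    ← (hasSum_oneSubPowCoeff_mul_pow a h₂).tsum_eq,
    tsum_mul_tsum_of_summable_norm (summable_norm_oneSubPowCoeff_mul_pow a h₁)
      (summable_norm_oneSubPowCoeff_mul_pow a h₂)]
  congr 1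
  funext p
  rw [mul_pow, mul_pow, ← Complex.exp_nat_mul, ← Complex.exp_nat_mul]
  push_cast
  rw [show I * (p.2 - p.1) * θ = p.1 * -(I * θ) + p.2 * (I * θ) by ring, Complex.exp_add]
  ring

def natEquivSubEq (n : ℤ) : ℕ ≃ {p : ℕ × ℕ | (p.2 : ℤ) - p.1 = n} where
  toFun m := ⟨(m + (-n).toNat, m + n.toNat), by simp only [Set.mem_ofPred_eq]; omega⟩
  invFun p := min p.1.1 p.1.2
  left_inv m := by simp only; omega
  right_inv p := by
    obtain ⟨⟨j, l⟩, hp⟩ := p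
    simp only [Set.mem_ofPred_eq] at hp
    ext <;> simp only <;> omega

lemma tsum_setOf_sub_eq {α : Type*} [AddCommMonoid α] [TopologicalSpace α] (g : ℕ → ℕ → α)
    (hg : ∀ j l, g j l = g l j) (n : ℤ) :
    ∑' p : {p : ℕ × ℕ | (p.2 : ℤ) - p.1 = n}, g p.1.1 p.1.2 = ∑' m, g m (m + n.natAbs) := by
  rw [← (natEquivSubEq n).tsum_eq]
  congr 1
  funext m
  simp only [natEquivSubEq, Equiv.coe_fn_mk]
  rcases le_total 0 n with hn | hn
  · rw [show (-n).toNat = 0 by omega, show n.toNat = n.natAbs by omega, add_zero]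
  · rw [show (-n).toNat = n.natAbs by omega, show n.toNat = 0 by omega, add_zero, hg]

open Polynomial in
lemma ascPochhammer_eval_mul_eval_add (x : ℝ) (N m : ℕ) :
    (ascPochhammer ℝ N).eval x * (ascPochhammer ℝ m).eval (x + N) =
      (ascPochhammer ℝ (N + m)).eval x := by
  simpa using congrArg (eval x) (ascPochhammer_mul ℝ N m)

lemma oneSubPowCoeff_mul_oneSubPowCoeff_add (a : ℝ) (N m : ℕ) :
    oneSubPowCoeff a m * oneSubPowCoeff a (m + N) =
      oneSubPowCoeff a N * ((ascPochhammer ℝ m).eval (-a) * (ascPochhammer ℝ m).eval (N - a) /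
        (ascPochhammer ℝ m).eval ((N : ℝ) + 1)) / m ! := by
  have hpos : 0 < (ascPochhammer ℝ m).eval ((N : ℝ) + 1) := ascPochhammer_pos m _ (by positivity)
  rw [oneSubPowCoeff, oneSubPowCoeff, oneSubPowCoeff, add_comm m, ← factorial_mul_ascPochhammer,
    ← ascPochhammer_eval_mul_eval_add, neg_add_eq_sub]
  field_simp

lemma tsum_oneSubPowCoeff_mul_oneSubPowCoeff_add (a : ℝ) (N : ℕ) (q : ℝ) :
    ∑' m, oneSubPowCoeff a m * oneSubPowCoeff a (m + N) * q ^ (m + (m + N)) =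
      oneSubPowCoeff a N * q ^ N * gaussHyp (-a) (N - a) (N + 1) (q ^ 2) := by
  rw [gaussHyp, ← tsum_mul_left]
  congr 1
  funext m
  rw [oneSubPowCoeff_mul_oneSubPowCoeff_add]
  ring

open Complex in
theorem fourierCoeff_one_sub_cpow_mul_one_sub_cpow (a : ℝ) {q : ℝ} (hq : |q| < 1) (n : ℤ) :
    1 / (2 * (π : ℂ)) * ∫ θ in (-π)..π,
        exp (-(I * n * θ)) * ((1 - q * exp (-(I * θ))) ^ (a : ℂ) * (1 - q * exp (I * θ)) ^ (a : ℂ))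
      = ((oneSubPowCoeff a n.natAbs * q ^ n.natAbs *
          gaussHyp (-a) (n.natAbs - a) (n.natAbs + 1) (q ^ 2) : ℝ) : ℂ) := by
  have hq' : ‖(q : ℂ)‖ < 1 := by rwa [norm_real, Real.norm_eq_abs]
  have hsum : Summable fun p : ℕ × ℕ =>
      ‖((oneSubPowCoeff a p.1 * oneSubPowCoeff a p.2 * q ^ (p.1 + p.2) : ℝ) : ℂ)‖ := by
    refine ((summable_norm_oneSubPowCoeff_mul_pow a hq').mul_norm
      (summable_norm_oneSubPowCoeff_mul_pow a hq')).congr fun p => ?_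
    push_cast
    simp only [pow_add, norm_mul, norm_pow]
    ring
  simp_rw [one_sub_cpow_mul_one_sub_cpow_eq_tsum a hq]
  rw [integral_exp_mul_tsum_mul_exp hsum, ← mul_assoc, one_div_mul_cancel (by simp [pi_ne_zero]),
    one_mul, tsum_setOf_sub_eq (fun j l => ((oneSubPowCoeff a j * oneSubPowCoeff a l *
      q ^ (j + l) : ℝ) : ℂ)) (fun j l => by ring_nf), ← ofReal_tsum,
    tsum_oneSubPowCoeff_mul_oneSubPowCoeff_add]

lemma Real.Gamma_add_nat_eq_mul_ascPochhammer {x : ℝ} (hx : ∀ k : ℕ, x ≠ -k) (N : ℕ) :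
    Gamma (x + N) = Gamma x * (ascPochhammer ℝ N).eval x := by
  induction N with
  | zero => simp
  | succ N ih =>
    have hne : x + N ≠ 0 := fun h => hx N (by linarith)
    rw [Nat.cast_succ, ← add_assoc, Gamma_add_one hne, ih, ascPochhammer_succ_eval]
    ring

lemma Real.Gamma_neg_one_half : Gamma (-(1 / 2)) = -2 * √π := by
  have h := Gamma_add_one (s := -(1 / 2)) (by norm_num)
  rw [show -(1 / 2 : ℝ) + 1 = 1 / 2 by norm_num, Gamma_one_half_eq] at h
  linarith

lemma oneSubPowCoeff_one_half (N : ℕ) :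
    oneSubPowCoeff (1 / 2) N = -(Gamma (N - 1 / 2) / (2 * √π * N !)) := by
  have hx : ∀ k : ℕ, -(1 / 2 : ℝ) ≠ -k := fun k h => by
    have h' : ((2 * k : ℕ) : ℝ) = (1 : ℕ) := by push_cast; linarith
    have := Nat.cast_injective h'
    omega
  rw [sub_eq_neg_add, Gamma_add_nat_eq_mul_ascPochhammer hx, Gamma_neg_one_half, oneSubPowCoeff]
  field_simp

/-- The Fourier coefficients of the reciprocal scattering function
`1/S(z) = (1-k⁻¹z⁻¹)^{1/2}(1-k⁻¹z)^{1/2}`: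
`F̄_n = -[Γ(|n|-1/2)/(2√π |n|!)] k^{-|n|} ₂F₁(-1/2,|n|-1/2;|n|+1;k^{-2})` for all `n ∈ ℤ`. -/
theorem reciprocal_scattering_fourier_coeff (k : ℝ) (hk : 1 < k) (n : ℤ) :
    (1 / (2 * (π : ℂ))) * ∫ θ in (-π)..π,
        Complex.exp (-(Complex.I * n * θ)) *
          (1 - (k : ℂ)⁻¹ * Complex.exp (-(Complex.I * θ))) ^ ((1 : ℂ) / 2) *
          (1 - (k : ℂ)⁻¹ * Complex.exp (Complex.I * θ)) ^ ((1 : ℂ) / 2)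
      = ((-(Real.Gamma ((n.natAbs : ℝ) - 1/2) / (2 * Real.sqrt π * (n.natAbs.factorial : ℝ))) *
          k ^ (-|n|) *
          gaussHyp (-(1/2)) ((n.natAbs : ℝ) - 1/2) ((n.natAbs : ℝ) + 1) (k ^ (-2 : ℤ)) : ℝ) : ℂ) := by
  have hq : |k⁻¹| < 1 := by
    rw [abs_inv, abs_of_pos (by linarith)]
    exact inv_lt_one_of_one_lt₀ hk
  have h := fourierCoeff_one_sub_cpow_mul_one_sub_cpow (1 / 2) hq n
  rw [oneSubPowCoeff_one_half, ← zpow_natCast, ← zpow_natCast, ← Int.abs_eq_natAbs, inv_zpow',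
    inv_zpow'] at h
  simp only [Complex.ofReal_inv, Complex.ofReal_div, Complex.ofReal_one, Complex.ofReal_ofNat,
    Nat.cast_ofNat] at h
  simpa only [mul_assoc] using h
end
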